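/- arXiv:2404.04594 — 6 statements merged into one kernel-verified Lean document; each statement's English description precedes it below -/
import Mathlib

section
/- Let J ⊆ ℝ be a nontrivial interval, let I be a nonempty index set, and for each i ∈ I let a_i, b_i : [0,1] → ℝ be continuous functions with b_i(t) ≥ 0 for all t ∈ [0,1]. Define c : J → ℝ ∪ {−∞} by c(μ) = inf_{i ∈ I} max_{t ∈ [0,1]} ( a_i(t) − μ·b_i(t) ), and assume c(μ) > −∞ for every μ ∈ J. Then: (1) c is non-increasing on J; (2) c is continuous from the left at every μ ∈ J that is a limit from the left of points of J; (3) c is differentiable at almost every μ ∈ J. -/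
/-!
Each `Mᵢ(μ) = max_{t ∈ [0,1]} (aᵢ(t) - μ bᵢ(t))` is continuous in `μ` (a maximum over a compact
set of a jointly continuous function) and non-increasing because `bᵢ ≥ 0`. Hence `c = infᵢ Mᵢ`
is non-increasing and, as an infimum of continuous functions, upper semicontinuous on `J`.
From the left a non-increasing function can only jump down, and upper semicontinuity forbids
that, so `c` is left continuous. Almost everywhere differentiability is Lebesgue's theorem for
monotone functions.
-/

open Set Filter Topology MeasureTheory

section SupOverCompact

variable {X : Type*} [TopologicalSpace X] {K : Set X} {a b : X → ℝ}

theorem IsCompact.continuous_sSup_image_sub_mul (hK : IsCompact K) (ha : ContinuousOn a K)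
    (hb : ContinuousOn b K) : Continuous fun μ : ℝ => sSup ((fun t => a t - μ * b t) '' K) := by
  have : CompactSpace K := isCompact_iff_compactSpace.mp hK
  simp_rw [image_eq_range, ← image_univ]
  exact isCompact_univ.continuous_sSup (f := fun (μ : ℝ) (t : K) => a t - μ * b t)
    (ha.domRestrict.comp continuous_snd |>.sub <|
      continuous_fst.mul (hb.domRestrict.comp continuous_snd))

theorem IsCompact.antitone_sSup_image_sub_mul (hK : IsCompact K) (ha : ContinuousOn a K)
    (hb : ContinuousOn b K) (hb_nonneg : ∀ t ∈ K, 0 ≤ b t) :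
    Antitone fun μ : ℝ => sSup ((fun t => a t - μ * b t) '' K) := by
  intro μ ν hμν
  have hbdd := (hK.image_of_continuousOn (ha.sub (continuousOn_const.mul hb) :
    ContinuousOn (fun t => a t - μ * b t) K)).bddAbove
  simp only [image_eq_range] at hbdd ⊢
  exact ciSup_mono hbdd fun t =>
    sub_le_sub_left (mul_le_mul_of_nonneg_right hμν (hb_nonneg t t.2)) _

end SupOverCompact

theorem AntitoneOn.tendsto_nhdsWithin_Iio_of_upperSemicontinuousWithinAt {f : ℝ → ℝ}
    {s : Set ℝ} {x : ℝ} (hf : AntitoneOn f s) (hx : x ∈ s)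
    (hfx : UpperSemicontinuousWithinAt f s x) : Tendsto f (𝓝[s ∩ Iio x] x) (𝓝 (f x)) := by
  refine tendsto_order.2 ⟨fun y hy => ?_, fun y hy => ?_⟩
  · filter_upwards [self_mem_nhdsWithin] with z hz
    exact hy.trans_le (hf hz.1 hx (le_of_lt hz.2))
  · exact nhdsWithin_mono x inter_subset_left (hfx y hy)

theorem AntitoneOn.ae_differentiableWithinAt_of_mem {f : ℝ → ℝ} {s : Set ℝ}
    (hf : AntitoneOn f s) : ∀ᵐ x, x ∈ s → DifferentiableWithinAt ℝ f s x := by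
  filter_upwards [hf.neg.ae_differentiableWithinAt_of_mem] with x hx hxs
  simpa using (hx hxs).neg

theorem statement5_general {ι : Type*} (J : Set ℝ)
    (a b : ι → ℝ → ℝ)
    (ha : ∀ i, ContinuousOn (a i) (Icc 0 1)) (hb : ∀ i, ContinuousOn (b i) (Icc 0 1))
    (hbnn : ∀ i, ∀ t ∈ Icc (0 : ℝ) 1, 0 ≤ b i t)
    (c : ℝ → ℝ)
    (hc : ∀ μ, c μ = sInf (Set.range fun i => sSup ((fun t => a i t - μ * b i t) '' Icc 0 1)))
    (hfin : ∀ μ ∈ J, BddBelow (Set.range fun i => sSup ((fun t => a i t - μ * b i t) '' Icc 0 1))) :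
    AntitoneOn c J ∧
    (∀ μ ∈ J, μ ∈ closure (J ∩ Iio μ) →
      Filter.Tendsto c (nhdsWithin μ (J ∩ Iio μ)) (nhds (c μ))) ∧
    (∀ᵐ μ ∂volume, μ ∈ J → ∃ d : ℝ, HasDerivWithinAt c d J μ) := by
  set M : ι → ℝ → ℝ := fun i μ => sSup ((fun t => a i t - μ * b i t) '' Icc 0 1)
  have hcM : c = fun μ => ⨅ i, M i μ := funext hc
  have hM_cont (i : ι) : Continuous (M i) :=
    isCompact_Icc.continuous_sSup_image_sub_mul (ha i) (hb i)
  have hM_anti (i : ι) : Antitone (M i) :=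
    isCompact_Icc.antitone_sSup_image_sub_mul (ha i) (hb i) (hbnn i)
  have hanti : AntitoneOn c J := fun μ hμ ν hν hμν => by
    rw [hcM]
    exact ciInf_mono (hfin ν hν) fun i => hM_anti i hμν
  have husc (μ : ℝ) : UpperSemicontinuousWithinAt c J μ := by
    rw [hcM]
    exact upperSemicontinuousWithinAt_ciInf (eventually_nhdsWithin_of_forall hfin)
      fun i => (hM_cont i).continuousWithinAt.upperSemicontinuousWithinAt
  refine ⟨hanti, fun μ hμ _ => hanti.tendsto_nhdsWithin_Iio_of_upperSemicontinuousWithinAt hμ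
    (husc μ), ?_⟩
  filter_upwards [hanti.ae_differentiableWithinAt_of_mem] with μ hμ hμJ
  exact ⟨_, (hμ hμJ).hasDerivWithinAt⟩

/-- for `c(μ) = inf_i max_{t∈[0,1]} (a_i(t) - μ·b_i(t))` with `a_i, b_i`
continuous and `b_i ≥ 0`, assuming `c(μ) > -∞` on a nontrivial interval `J`, the function
`c` is non-increasing on `J`, continuous from the left at every point of `J` which is a
left-limit of points of `J`, and differentiable (as a function on `J`) at almost every
`μ ∈ J`. -/
theorem statement5 {ι : Type*} [Nonempty ι] (J : Set ℝ) (hJ : J.OrdConnected)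
    (hJnt : ∃ x ∈ J, ∃ y ∈ J, x < y)
    (a b : ι → ℝ → ℝ)
    (ha : ∀ i, ContinuousOn (a i) (Icc 0 1)) (hb : ∀ i, ContinuousOn (b i) (Icc 0 1))
    (hbnn : ∀ i, ∀ t ∈ Icc (0 : ℝ) 1, 0 ≤ b i t)
    (c : ℝ → ℝ)
    (hc : ∀ μ, c μ = sInf (Set.range fun i => sSup ((fun t => a i t - μ * b i t) '' Icc 0 1)))
    (hfin : ∀ μ ∈ J, BddBelow (Set.range fun i => sSup ((fun t => a i t - μ * b i t) '' Icc 0 1))) :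
    AntitoneOn c J ∧
    (∀ μ ∈ J, μ ∈ closure (J ∩ Iio μ) →
      Filter.Tendsto c (nhdsWithin μ (J ∩ Iio μ)) (nhds (c μ))) ∧
    (∀ᵐ μ ∂volume, μ ∈ J → ∃ d : ℝ, HasDerivWithinAt c d J μ) :=
  statement5_general J a b ha hb hbnn c hc hfin
end

section
/- Let N ≥ 5, 2* = 2N/(N−2), and let c₃, C₂ > 0. Let a : (0,1] → (0, ∞) satisfy a(ε) ≥ c₃·ε² for every ε ∈ (0,1]. Then there exist constants C > 0 and μ** > 0 such that for every μ ∈ (0, μ**) and every ε ∈ (0,1]: (1/2)·(1/a(ε)) − (μ/2*)·(1/a(ε))^{2*/2} + C₂·ε^{N−4} ≤ (1/N)·μ^{1−N/2} + C·μ^{(N−2)(N−4)/4}. -/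
/-!
Write `Y = μ ^ ((N - 2) / 2)`, so that `μ ^ (1 - N / 2) = Y⁻¹`. Young's inequality with exponents
`2*/2` and `N/2` bounds `t / 2 - μ t ^ (2*/2) / 2*` by `Y⁻¹ / N` for every `t ≥ 0`, in particular
for `t = 1 / a(ε)`. If `ε² ≤ (N / c₃) Y`, then `C₂ ε ^ (N - 4)` is at most
`C₂ (N / c₃) ^ ((N - 4) / 2) μ ^ ((N - 2)(N - 4) / 4)`, the correction term. Otherwise
`a(ε) ≥ c₃ ε² > N Y`, so after dropping the negative term the first term is at most `Y⁻¹ / (2N)`,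
while `C₂ ε ^ (N - 4) ≤ C₂ < Y⁻¹ / (2N)` as soon as `Y < 1 / (2 N C₂)`, which defines `μ**`.
-/

open Set

noncomputable section

/-- The critical Sobolev exponent `2* = 2N/(N-2)`. -/
def critExp (N : ℕ) : ℝ := 2 * (N : ℝ) / ((N : ℝ) - 2)

open Real

lemma Real.young_inequality_of_nonneg_weighted {a b p q w : ℝ} (ha : 0 ≤ a) (hb : 0 ≤ b)
    (hw : 0 < w) (hpq : p.HolderConjugate q) :
    a * b ≤ w * a ^ p / p + w ^ (1 - q) * b ^ q / q := by
  have hp : p ≠ 0 := hpq.ne_zero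
  have hscale : (w ^ p⁻¹ * a) * (w ^ (-p⁻¹) * b) = a * b := by
    rw [mul_mul_mul_comm, ← rpow_add hw, add_neg_cancel, rpow_zero, one_mul]
  have hexp : -p⁻¹ * q = 1 - q := by
    rw [neg_mul, inv_mul_eq_div, hpq.symm.div_conj_eq_sub_one]; ring
  have := young_inequality_of_nonneg (by positivity : 0 ≤ w ^ p⁻¹ * a)
    (by positivity : 0 ≤ w ^ (-p⁻¹) * b) hpq
  rwa [hscale, mul_rpow (by positivity) ha, mul_rpow (by positivity) hb, ← rpow_mul hw.le,
    ← rpow_mul hw.le, inv_mul_cancel₀ hp, rpow_one, hexp] at this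

lemma critExp_pos {N : ℕ} (hN : 2 < N) : 0 < critExp N := by
  have : (2 : ℝ) < N := by exact_mod_cast hN
  unfold critExp
  exact div_pos (by linarith) (by linarith)

lemma holderConjugate_critExp_half {N : ℕ} (hN : 2 < N) :
    (critExp N / 2).HolderConjugate ((N : ℝ) / 2) := by
  have : (2 : ℝ) < N := by exact_mod_cast hN
  rw [holderConjugate_iff, critExp]
  constructor
  · rw [lt_div_iff₀ (by norm_num), lt_div_iff₀ (by linarith)]
    linarith
  · field_simp
    ring

-- Young's inequality with exponents `2*/2`, `N/2` and weight `μ/2`.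
lemma half_mul_sub_le_rpow {N : ℕ} (hN : 2 < N) {μ t : ℝ} (hμ : 0 < μ) (ht : 0 ≤ t) :
    1 / 2 * t - μ / critExp N * t ^ (critExp N / 2) ≤ 1 / N * μ ^ (1 - (N : ℝ) / 2) := by
  have hpq := holderConjugate_critExp_half hN
  have hyoung := young_inequality_of_nonneg_weighted ht (by norm_num : (0 : ℝ) ≤ 1 / 2)
    (by positivity : 0 < μ / 2) hpq
  have hlast : (μ / 2) ^ (1 - (N : ℝ) / 2) * (1 / 2) ^ ((N : ℝ) / 2) / ((N : ℝ) / 2)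
      = 1 / N * μ ^ (1 - (N : ℝ) / 2) := by
    rw [div_eq_mul_one_div μ, mul_rpow hμ.le (by norm_num), mul_assoc, ← rpow_add (by norm_num),
      sub_add_cancel, rpow_one]
    field_simp
  have hfirst : μ / 2 * t ^ (critExp N / 2) / (critExp N / 2)
      = μ / critExp N * t ^ (critExp N / 2) := by
    field_simp [(critExp_pos hN).ne']
  rw [hlast, hfirst] at hyoung
  linarith

lemma rpow_sub_four_le_of_sq_le {N : ℕ} (hN : 4 ≤ N) {ε K μ : ℝ} (hε : 0 ≤ ε) (hK : 0 ≤ K)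
    (hμ : 0 ≤ μ) (h : ε ^ 2 ≤ K * μ ^ (((N : ℝ) - 2) / 2)) :
    ε ^ ((N : ℝ) - 4) ≤ K ^ (((N : ℝ) - 4) / 2) * μ ^ (((N : ℝ) - 2) * ((N : ℝ) - 4) / 4) := by
  have hN4 : (0 : ℝ) ≤ ((N : ℝ) - 4) / 2 := by
    have : (4 : ℝ) ≤ N := by exact_mod_cast hN
    linarith
  calc ε ^ ((N : ℝ) - 4) = (ε ^ 2) ^ (((N : ℝ) - 4) / 2) := by
        rw [← rpow_natCast, ← rpow_mul hε]; ring_nf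
    _ ≤ (K * μ ^ (((N : ℝ) - 2) / 2)) ^ (((N : ℝ) - 4) / 2) := by gcongr
    _ = K ^ (((N : ℝ) - 4) / 2) * μ ^ (((N : ℝ) - 2) * ((N : ℝ) - 4) / 4) := by
        rw [mul_rpow hK (by positivity), ← rpow_mul hμ]; ring_nf

lemma half_one_div_add_mul_le {n Y A C e : ℝ} (hn : 0 < n) (hY : 0 < Y) (hA : n * Y < A)
    (hC : 0 < C) (hYC : Y < (2 * n * C)⁻¹) (he : e ≤ 1) :
    1 / 2 * (1 / A) + C * e ≤ 1 / n * Y⁻¹ := by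
  have hfirst : 1 / 2 * (1 / A) ≤ 1 / (2 * n) * Y⁻¹ :=
    calc 1 / 2 * (1 / A) ≤ 1 / 2 * (1 / (n * Y)) := by gcongr
      _ = 1 / (2 * n) * Y⁻¹ := by field_simp
  have hsecond : C * e ≤ 1 / (2 * n) * Y⁻¹ :=
    calc C * e ≤ C := mul_le_of_le_one_right hC.le he
      _ ≤ 1 / (2 * n) * Y⁻¹ := by
        rw [lt_inv_comm₀ hY (by positivity)] at hYC
        rw [one_div_mul_eq_div, le_div_iff₀ (by positivity)]
        linarith
  calc 1 / 2 * (1 / A) + C * e ≤ 1 / (2 * n) * Y⁻¹ + 1 / (2 * n) * Y⁻¹ :=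
        add_le_add hfirst hsecond
    _ = 1 / n * Y⁻¹ := by ring

theorem statement9_general (N : ℕ) (hN : 5 ≤ N) (c₃ C₂ : ℝ) (hc₃ : 0 < c₃) (hC₂ : 0 < C₂)
    (a : ℝ → ℝ)
    (ha : ∀ ε ∈ Ioc (0 : ℝ) 1, c₃ * ε ^ 2 ≤ a ε) :
    ∃ C : ℝ, 0 < C ∧ ∃ μstar : ℝ, 0 < μstar ∧
      ∀ μ ∈ Ioo (0 : ℝ) μstar, ∀ ε ∈ Ioc (0 : ℝ) 1,
        (1 / 2) * (1 / a ε) - (μ / critExp N) * (1 / a ε) ^ (critExp N / 2)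
            + C₂ * ε ^ ((N : ℝ) - 4)
          ≤ (1 / N : ℝ) * μ ^ (1 - (N : ℝ) / 2)
            + C * μ ^ (((N : ℝ) - 2) * ((N : ℝ) - 4) / 4) := by
  have hN' : (5 : ℝ) ≤ N := by exact_mod_cast hN
  set K : ℝ := N / c₃
  refine ⟨C₂ * K ^ (((N : ℝ) - 4) / 2), by positivity,
    (2 * N * C₂)⁻¹ ^ ((((N : ℝ) - 2) / 2)⁻¹), by positivity, ?_⟩
  rintro μ ⟨hμ, hμstar⟩ ε ⟨hε, hε1⟩
  set Y := μ ^ (((N : ℝ) - 2) / 2) with hY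
  have hμY : μ ^ (1 - (N : ℝ) / 2) = Y⁻¹ := by rw [hY, ← rpow_neg hμ.le]; ring_nf
  have ha_pos : 0 < a ε := (by positivity : 0 < c₃ * ε ^ 2).trans_le (ha ε ⟨hε, hε1⟩)
  have hyoung := half_mul_sub_le_rpow (N := N) (by omega) hμ (one_div_pos.2 ha_pos).le
  have hC_pos : 0 ≤ C₂ * K ^ (((N : ℝ) - 4) / 2) * μ ^ (((N : ℝ) - 2) * ((N : ℝ) - 4) / 4) := by
    positivity
  rcases le_or_gt (ε ^ 2) (K * Y) with hsmall | hlarge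
  · have hε_pow := rpow_sub_four_le_of_sq_le (by omega) hε.le (by positivity) hμ.le hsmall
    linarith [mul_le_mul_of_nonneg_left hε_pow hC₂.le]
  · have hdrop : 0 ≤ μ / critExp N * (1 / a ε) ^ (critExp N / 2) := by
      have hcrit := critExp_pos (by omega : 2 < N)
      positivity
    have haY : N * Y < a ε :=
      calc N * Y = c₃ * (K * Y) := by simp only [K]; field_simp
        _ < c₃ * ε ^ 2 := by gcongr
        _ ≤ a ε := ha ε ⟨hε, hε1⟩
    have hYC : Y < (2 * N * C₂)⁻¹ :=
      (lt_rpow_inv_iff_of_pos (z := ((N : ℝ) - 2) / 2) hμ.le (by positivity) (by linarith)).1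
        hμstar
    have hbound := half_one_div_add_mul_le (by positivity) (rpow_pos_of_pos hμ _) haY hC₂ hYC
      (rpow_le_one (z := (N : ℝ) - 4) hε.le hε1 (by linarith))
    rw [hμY]
    linarith

/-- the key supremum estimate for the mountain pass level in dimension
`N ≥ 5`. If `a(ε) ≥ c₃ε²`, then for suitable `C > 0` and small `μ`,
`(1/2)(1/a(ε)) - (μ/2*)(1/a(ε))^{2*/2} + C₂ε^{N-4} ≤ (1/N)μ^{1-N/2} + Cμ^{(N-2)(N-4)/4}`. -/
theorem statement9 (N : ℕ) (hN : 5 ≤ N) (c₃ C₂ : ℝ) (hc₃ : 0 < c₃) (hC₂ : 0 < C₂)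
    (a : ℝ → ℝ) (hapos : ∀ ε ∈ Ioc (0 : ℝ) 1, 0 < a ε)
    (ha : ∀ ε ∈ Ioc (0 : ℝ) 1, c₃ * ε ^ 2 ≤ a ε) :
    ∃ C : ℝ, 0 < C ∧ ∃ μstar : ℝ, 0 < μstar ∧
      ∀ μ ∈ Ioo (0 : ℝ) μstar, ∀ ε ∈ Ioc (0 : ℝ) 1,
        (1 / 2) * (1 / a ε) - (μ / critExp N) * (1 / a ε) ^ (critExp N / 2)
            + C₂ * ε ^ ((N : ℝ) - 4)
          ≤ (1 / N : ℝ) * μ ^ (1 - (N : ℝ) / 2)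
            + C * μ ^ (((N : ℝ) - 2) * ((N : ℝ) - 4) / 4) :=
  statement9_general N hN c₃ C₂ hc₃ hC₂ a ha
end
end

section
/- Let N = 4 and let c₃, C₂ > 0. Let a : (0, 1/2] → (0, ∞) satisfy a(ε) ≥ c₃·ε²·|ln ε| for every ε ∈ (0, 1/2]. Then there exist constants C > 0 and μ** ∈ (0,1) such that for every μ ∈ (0, μ**) and every ε ∈ (0, 1/2]: (1/2)·(1/a(ε)) − (μ/4)·(1/a(ε))² + C₂/|ln ε| ≤ (1/4)·μ^{−1} + C/|ln μ|. -/
open Set Real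

/-! Write `t = 1 / a ε`. The quadratic `t / 2 - μ t² / 4` never exceeds its maximum `1 / (4μ)`,
so only the term `C₂ / |ln ε|` has to be absorbed. If `ε⁴ ≤ μ`, then `|ln μ| ≤ 4 |ln ε|` and it is
absorbed by `4 C₂ / |ln μ|`. If `μ < ε⁴`, the lower bound on `a` gives `a ε ≥ c₃ ln 2 · √μ`, so for
small `μ` both `t / 2` and `C₂ / |ln ε| ≤ C₂ / ln 2` are at most `1 / (8μ)`. -/

lemma half_mul_sub_mul_sq_le_inv {μ : ℝ} (hμ : 0 < μ) (t : ℝ) :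
    (1 / 2) * t - (μ / 4) * t ^ 2 ≤ (1 / 4) * μ⁻¹ := by
  have hsq : (1 / 4) * μ⁻¹ - ((1 / 2) * t - (μ / 4) * t ^ 2) = (μ * t - 1) ^ 2 / (4 * μ) := by
    field_simp
    ring
  have : 0 ≤ (μ * t - 1) ^ 2 / (4 * μ) := by positivity
  linarith

lemma log_two_le_abs_log {ε : ℝ} (hε0 : 0 < ε) (hε : ε ≤ 1 / 2) : log 2 ≤ |log ε| := by
  have h : log ε ≤ log (1 / 2) := log_le_log hε0 hε
  rw [one_div, log_inv] at h
  exact (le_neg.mp h).trans (neg_le_abs _)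

lemma abs_log_le_mul_abs_log_of_pow_le {x y : ℝ} {n : ℕ} (hx : 0 < x) (hxy : x ^ n ≤ y)
    (hy : y ≤ 1) : |log y| ≤ n * |log x| := by
  have hlog : n * log x ≤ log y := by
    rw [← log_pow]
    exact log_le_log (by positivity) hxy
  rw [abs_of_nonpos (log_nonpos ((pow_pos hx n).le.trans hxy) hy)]
  nlinarith [neg_abs_le (log x), (Nat.cast_nonneg n : (0 : ℝ) ≤ n)]

lemma half_div_le_inv_of_sqrt_le {c μ b : ℝ} (hμ : 0 < μ) (hμc : √μ ≤ c / 4)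
    (hb : c * √μ ≤ b) : (1 / 2) * (1 / b) ≤ (1 / 8) * μ⁻¹ := by
  have hs : 0 < √μ := sqrt_pos.mpr hμ
  have h8 : 8 * μ ≤ 2 * b := by nlinarith [sq_sqrt hμ.le]
  calc (1 / 2) * (1 / b) = 1 / (2 * b) := by ring
    _ ≤ 1 / (8 * μ) := one_div_le_one_div_of_le (by positivity) h8
    _ = (1 / 8) * μ⁻¹ := by ring

lemma div_abs_log_le_of_pow_four_le {ε μ C : ℝ} (hε : ε ∈ Ioc (0 : ℝ) (1 / 2)) (hμ0 : 0 < μ)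
    (hμ1 : μ < 1) (hεμ : ε ^ 4 ≤ μ) (hC : 0 ≤ C) : C / |log ε| ≤ 4 * C / |log μ| := by
  have hlogμ : |log μ| ≤ 4 * |log ε| := by
    exact_mod_cast abs_log_le_mul_abs_log_of_pow_le hε.1 hεμ hμ1.le
  have hlogμ0 : 0 < |log μ| := abs_pos.mpr (log_neg hμ0 hμ1).ne
  have hlogε0 : 0 < |log ε| := (log_pos one_lt_two).trans_le (log_two_le_abs_log hε.1 hε.2)
  rw [div_le_div_iff₀ hlogε0 hlogμ0]
  nlinarith

lemma div_abs_log_le_inv {ε μ C : ℝ} (hε : ε ∈ Ioc (0 : ℝ) (1 / 2)) (hC : 0 < C) (hμ0 : 0 < μ)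
    (hμ : μ < log 2 / (8 * C)) : C / |log ε| ≤ (1 / 8) * μ⁻¹ := by
  have hlog2 : 0 < log 2 := log_pos one_lt_two
  calc C / |log ε| ≤ C / log 2 :=
        div_le_div_of_nonneg_left hC.le hlog2 (log_two_le_abs_log hε.1 hε.2)
    _ ≤ 1 / (8 * μ) := by
      rw [div_le_div_iff₀ hlog2 (by positivity)]
      rw [lt_div_iff₀ (by positivity)] at hμ
      linarith
    _ = (1 / 8) * μ⁻¹ := by ring

theorem statement10_general (c₃ C₂ : ℝ) (hc₃ : 0 < c₃) (hC₂ : 0 < C₂)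
    (a : ℝ → ℝ)
    (ha : ∀ ε ∈ Ioc (0 : ℝ) (1 / 2), c₃ * ε ^ 2 * |Real.log ε| ≤ a ε) :
    ∃ C : ℝ, 0 < C ∧ ∃ μstar ∈ Ioo (0 : ℝ) 1,
      ∀ μ ∈ Ioo (0 : ℝ) μstar, ∀ ε ∈ Ioc (0 : ℝ) (1 / 2),
        (1 / 2) * (1 / a ε) - (μ / 4) * (1 / a ε) ^ 2 + C₂ / |Real.log ε|
          ≤ (1 / 4) * μ⁻¹ + C / |Real.log μ| := by
  refine ⟨4 * C₂, by positivity,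
    min (1 / 2) (min ((c₃ * log 2 / 4) ^ 2) (log 2 / (8 * C₂))),
    ⟨by positivity, (min_le_left _ _).trans_lt (by norm_num)⟩, ?_⟩
  rintro μ ⟨hμ0, hμ⟩ ε hε
  simp only [lt_min_iff] at hμ
  obtain ⟨hμ1, hμc, hμC₂⟩ := hμ
  rcases le_or_gt (ε ^ 4) μ with hnear | hfar
  · linarith [half_mul_sub_mul_sq_le_inv hμ0 (1 / a ε),
      div_abs_log_le_of_pow_four_le hε hμ0 (by linarith) hnear hC₂.le]
  · have hsqrt : √μ < ε ^ 2 := (sqrt_lt' (pow_pos hε.1 2)).mpr (by linarith)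
    have ha' : c₃ * log 2 * √μ ≤ a ε := calc
      c₃ * log 2 * √μ = c₃ * √μ * log 2 := by ring
      _ ≤ c₃ * ε ^ 2 * |log ε| := by gcongr; exact log_two_le_abs_log hε.1 hε.2
      _ ≤ a ε := ha ε hε
    have hlin := half_div_le_inv_of_sqrt_le hμ0 ((sqrt_lt' (by positivity)).mpr hμc).le ha'
    have hC₂μ := div_abs_log_le_inv hε hC₂ hμ0 hμC₂
    have : 0 ≤ (μ / 4) * (1 / a ε) ^ 2 := by positivity
    have : 0 ≤ 4 * C₂ / |log μ| := by positivity
    linarith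

/-- the key supremum estimate for the mountain pass level in dimension
`N = 4`. If `a(ε) ≥ c₃ε²|ln ε|` on `(0,1/2]`, then for suitable `C > 0` and small `μ`,
`(1/2)(1/a(ε)) - (μ/4)(1/a(ε))² + C₂/|ln ε| ≤ (1/4)μ⁻¹ + C/|ln μ|`. -/
theorem statement10 (c₃ C₂ : ℝ) (hc₃ : 0 < c₃) (hC₂ : 0 < C₂)
    (a : ℝ → ℝ) (hapos : ∀ ε ∈ Ioc (0 : ℝ) (1 / 2), 0 < a ε)
    (ha : ∀ ε ∈ Ioc (0 : ℝ) (1 / 2), c₃ * ε ^ 2 * |Real.log ε| ≤ a ε) :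
    ∃ C : ℝ, 0 < C ∧ ∃ μstar ∈ Ioo (0 : ℝ) 1,
      ∀ μ ∈ Ioo (0 : ℝ) μstar, ∀ ε ∈ Ioc (0 : ℝ) (1 / 2),
        (1 / 2) * (1 / a ε) - (μ / 4) * (1 / a ε) ^ 2 + C₂ / |Real.log ε|
          ≤ (1 / 4) * μ⁻¹ + C / |Real.log μ| :=
  statement10_general c₃ C₂ hc₃ hC₂ a ha
end

section
/- Let N = 3 and let c₃, C₂ > 0. Let a : (0,1] → (0, ∞) satisfy a(ε) ≥ c₃·ε for every ε ∈ (0,1]. Then there exist constants C > 0 and μ** > 0 such that for every μ ∈ (0, μ**) and every ε ∈ (0,1]: (1/2)·(1/a(ε)) − (μ/6)·(1/a(ε))³ + C₂·ε + C₂·μ ≤ (1/3)·μ^{−1/2} + C·μ^{1/2}. -/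
/-!
Write `m = √μ` and `t = 1 / a(ε)`. Since `3x - x³ ≤ 2` for `x ≥ 0` (as `2 - 3x + x³ = (x - 1)²(x + 2)`),
`t/2 - m²t³/6 = (3mt - (mt)³) / (6m) ≤ 1/(3m)`, the maximum being attained at `t = 1/m`.
The term `C₂ε` is absorbed in one of two ways: if `mt ≥ 1/2` then `ε ≤ 1/(c₃t) ≤ 2m/c₃`, so it is `O(m)`;
if `mt < 1/2` then `t/2 < 1/(4m)` leaves a margin `1/(12m)`, which exceeds `C₂ ≥ C₂ε` once `m ≤ 1/(12C₂)`.
-/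

open Set

lemma three_mul_sub_pow_three_le_two {x : ℝ} (hx : -2 ≤ x) : 3 * x - x ^ 3 ≤ 2 := by
  nlinarith [mul_nonneg (sq_nonneg (x - 1)) (by linarith : 0 ≤ x + 2)]

lemma half_mul_sub_mul_pow_three_le {m t : ℝ} (hm : 0 < m) (ht : 0 ≤ t) :
    (1 / 2) * t - (m ^ 2 / 6) * t ^ 3 ≤ 1 / (3 * m) := by
  have hx := three_mul_sub_pow_three_le_two (x := m * t) (by nlinarith)
  rw [le_div_iff₀ (by positivity)]
  nlinarith

lemma half_mul_sub_mul_pow_three_add_le {c₃ C₂ m t ε : ℝ} (hc₃ : 0 < c₃) (hC₂ : 0 < C₂)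
    (hm : 0 < m) (hm₁ : m ≤ 1) (hmC₂ : 12 * C₂ * m ≤ 1) (ht : 0 < t) (hε : ε ∈ Ioc (0 : ℝ) 1) (hεt : c₃ * ε * t ≤ 1) :
    (1 / 2) * t - (m ^ 2 / 6) * t ^ 3 + C₂ * ε + C₂ * m ^ 2
      ≤ 1 / (3 * m) + (C₂ + 2 * C₂ / c₃) * m := by
  obtain ⟨hε₀, hε₁⟩ := hε
  have hm_sq : C₂ * m ^ 2 ≤ C₂ * m :=
    mul_le_mul_of_nonneg_left (by nlinarith) hC₂.le
  have hslack : 0 ≤ 2 * C₂ / c₃ * m := by positivity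
  rcases le_or_gt 1 (2 * m * t) with hx | hx
  · have hε_le : C₂ * ε ≤ 2 * C₂ / c₃ * m := by
      rw [div_mul_eq_mul_div, le_div_iff₀ hc₃]
      nlinarith [mul_le_mul_of_nonneg_left hx (by positivity : 0 ≤ C₂ * ε)]
    linarith [half_mul_sub_mul_pow_three_le hm ht.le]
  · have hhalf : (1 / 2) * t ≤ 1 / (3 * m) - 1 / (12 * m) := by
      rw [show 1 / (3 * m) - 1 / (12 * m) = 1 / (4 * m) by field_simp; norm_num,
        le_div_iff₀ (by positivity)]
      linarith
    have hC₂_le : C₂ ≤ 1 / (12 * m) := by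
      rw [le_div_iff₀ (by positivity)]
      linarith
    have hcube : 0 ≤ (m ^ 2 / 6) * t ^ 3 := by positivity
    nlinarith

theorem statement11_general (c₃ C₂ : ℝ) (hc₃ : 0 < c₃) (hC₂ : 0 < C₂)
    (a : ℝ → ℝ)
    (ha : ∀ ε ∈ Ioc (0 : ℝ) 1, c₃ * ε ≤ a ε) :
    ∃ C : ℝ, 0 < C ∧ ∃ μstar : ℝ, 0 < μstar ∧
      ∀ μ ∈ Ioo (0 : ℝ) μstar, ∀ ε ∈ Ioc (0 : ℝ) 1,
        (1 / 2) * (1 / a ε) - (μ / 6) * (1 / a ε) ^ 3 + C₂ * ε + C₂ * μ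
          ≤ (1 / 3) * μ ^ (-(1 : ℝ) / 2) + C * μ ^ ((1 : ℝ) / 2) := by
  set δ := min 1 (1 / (12 * C₂))
  refine ⟨C₂ + 2 * C₂ / c₃, by positivity, δ ^ 2, by positivity, ?_⟩
  rintro μ ⟨hμ₀, hμδ⟩ ε hε
  have hm : 0 < √μ := Real.sqrt_pos.mpr hμ₀
  have hmδ : √μ < δ := by
    simpa [Real.sqrt_sq (by positivity : 0 ≤ δ)] using Real.sqrt_lt_sqrt hμ₀.le hμδ
  have hmC₂ : 12 * C₂ * √μ ≤ 1 := by
    have := hmδ.le.trans (min_le_right _ _)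
    rwa [le_div_iff₀ (by positivity), mul_comm] at this
  have haε : 0 < a ε := (mul_pos hc₃ hε.1).trans_le (ha ε hε)
  have hεt : c₃ * ε * (1 / a ε) ≤ 1 := by
    rw [mul_one_div, div_le_one haε]
    exact ha ε hε
  have key := half_mul_sub_mul_pow_three_add_le hc₃ hC₂ hm (hmδ.le.trans (min_le_left _ _))
    hmC₂ (by positivity) hε hεt
  have hneg : μ ^ (-(1 : ℝ) / 2) = 1 / √μ := by
    rw [Real.sqrt_eq_rpow, neg_div, Real.rpow_neg hμ₀.le, inv_eq_one_div]
  rw [Real.sq_sqrt hμ₀.le] at key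
  rwa [hneg, ← Real.sqrt_eq_rpow, one_div_mul_one_div (3 : ℝ)]

/-- the key supremum estimate for the mountain pass level in dimension
`N = 3`. If `a(ε) ≥ c₃ε` on `(0,1]`, then for suitable `C > 0` and small `μ`,
`(1/2)(1/a(ε)) - (μ/6)(1/a(ε))³ + C₂ε + C₂μ ≤ (1/3)μ^{-1/2} + Cμ^{1/2}`. -/
theorem statement11 (c₃ C₂ : ℝ) (hc₃ : 0 < c₃) (hC₂ : 0 < C₂)
    (a : ℝ → ℝ) (hapos : ∀ ε ∈ Ioc (0 : ℝ) 1, 0 < a ε)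
    (ha : ∀ ε ∈ Ioc (0 : ℝ) 1, c₃ * ε ≤ a ε) :
    ∃ C : ℝ, 0 < C ∧ ∃ μstar : ℝ, 0 < μstar ∧
      ∀ μ ∈ Ioo (0 : ℝ) μstar, ∀ ε ∈ Ioc (0 : ℝ) 1,
        (1 / 2) * (1 / a ε) - (μ / 6) * (1 / a ε) ^ 3 + C₂ * ε + C₂ * μ
          ≤ (1 / 3) * μ ^ (-(1 : ℝ) / 2) + C * μ ^ ((1 : ℝ) / 2) :=
  statement11_general c₃ C₂ hc₃ hC₂ a ha
end

section
/- Let N ≥ 3, S > 0, C > 0, and in addition, if N = 3, let h₀ ≥ 0 and δ₀ > 0 satisfy (1/3)·S^{3/2}·δ₀ > h₀. For μ ∈ (0,1) define h(μ) = C·μ^{(N−2)(N−4)/4} if N ≥ 5, h(μ) = C/|ln μ| if N = 4, h(μ) = h₀ + C·μ^{1/2} if N = 3; δ(μ) = μ^{(N−1)/2} if N ≥ 5, δ(μ) = μ·|ln μ|^{−1/2} if N = 4, δ(μ) = δ₀·μ^{1/2} if N = 3; and g(μ) = (1/N)·S^{N/2}·μ^{1−N/2} + h(μ). Let μ** ∈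 (0,1) be such that g is non-increasing on (0, μ**), and let c : (0, μ**) → ℝ be a non-increasing function satisfying (1/N)·S^{N/2}·μ^{1−N/2} ≤ c(μ) ≤ g(μ) for every μ ∈ (0, μ**). Then there exists a Lebesgue measurable set S₀ ⊆ (0, μ**) such that: (1) for every μ ∈ (0, μ**), the set S₀ ∩ (0, μ) has positive Lebesgue measure; (2) for every μ ∈ S₀, c is differentiable at μ and −c′(μ) ≤ (1 + δ(μ))·(−g′(μ)). -/
/-!
Struwe's monotonicity trick. Write `g = K μ^γ + h`, so that `g - h ≤ c ≤ g`. If `-c' > (1 + δ)(-g')`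
held almost everywhere on some `(0, μ)`, then, since the antitone `c` satisfies
`∫ₘᵇ -c' ≤ c m - c b` and `δ` is nondecreasing, integrating over `[m, b] ⊆ (0, μ)` would give
`(1 + δ m)(g m - g b) ≤ c m - c b ≤ g m - g b + h b`, i.e. `δ m (g m - g b) ≤ h b`. In every
dimension this fails for arbitrarily small `m < b`: the gain `δ m · K (m^γ - b^γ)` coming from the
singular leading term beats `(1 + δ m) h b` (take `m = b / 2` for `N ≥ 5`, `m = b²` for `N = 4`,
and `m = s² b` with `K δ₀ (1 - s) > h₀` for `N = 3`).
-/

open Set MeasureTheory Filter Topology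

theorem AntitoneOn.intervalIntegrable_neg_deriv {c : ℝ → ℝ} {a b : ℝ} (hab : a ≤ b)
    (hc : AntitoneOn c (Icc a b)) : IntervalIntegrable (fun x => -deriv c x) volume a b := by
  rw [← deriv.neg']
  exact (uIcc_of_le hab ▸ hc.neg).intervalIntegrable_deriv

theorem AntitoneOn.intervalIntegral_neg_deriv_le {c : ℝ → ℝ} {a b : ℝ} (hab : a ≤ b)
    (hc : AntitoneOn c (Icc a b)) : ∫ x in a..b, -deriv c x ≤ c a - c b := by
  have hmem := (uIcc_of_le hab ▸ hc.neg).intervalIntegral_deriv_mem_uIcc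
  have hcab : c b ≤ c a := hc ⟨le_rfl, hab⟩ ⟨hab, le_rfl⟩ hab
  rw [uIcc_of_le (by simpa using hcab)] at hmem
  simpa [sub_eq_neg_add, add_comm] using hmem.2

theorem AntitoneOn.intervalIntegral_neg_deriv_eq {g : ℝ → ℝ} {a b : ℝ} (hab : a ≤ b)
    (hg : AntitoneOn g (Icc a b)) (hd : ∀ x ∈ Icc a b, DifferentiableAt ℝ g x) :
    ∫ x in a..b, -deriv g x = g a - g b := by
  rw [intervalIntegral.integral_neg, intervalIntegral.integral_deriv_eq_sub
    (by rwa [uIcc_of_le hab]) ?_, neg_sub]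
  have := (hg.intervalIntegrable_neg_deriv hab).neg
  simpa only [Pi.neg_def, neg_neg] using this

theorem AntitoneOn.deriv_nonpos_of_mem_Ioo {g : ℝ → ℝ} {a b x : ℝ}
    (hg : AntitoneOn g (Icc a b)) (hx : x ∈ Ioo a b) : deriv g x ≤ 0 := by
  rw [← derivWithin_of_mem_nhds (Icc_mem_nhds hx.1 hx.2)]
  exact hg.derivWithin_nonpos

theorem mul_sub_le_sub_of_ae_le_neg_deriv {c g δ : ℝ → ℝ} {m b : ℝ} (hmb : m ≤ b)
    (hcmono : AntitoneOn c (Icc m b)) (hgmono : AntitoneOn g (Icc m b))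
    (hg : ∀ x ∈ Icc m b, DifferentiableAt ℝ g x) (hδ : MonotoneOn δ (Icc m b))
    (hle : ∀ᵐ x, x ∈ Ioo m b → (1 + δ x) * -deriv g x ≤ -deriv c x) :
    (1 + δ m) * (g m - g b) ≤ c m - c b := by
  have hgint : IntervalIntegrable (fun x => (1 + δ m) * -deriv g x) volume m b :=
    (hgmono.intervalIntegrable_neg_deriv hmb).const_mul _
  calc (1 + δ m) * (g m - g b) = ∫ x in m..b, (1 + δ m) * -deriv g x := by
        rw [intervalIntegral.integral_const_mul, hgmono.intervalIntegral_neg_deriv_eq hmb hg]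
    _ ≤ ∫ x in m..b, -deriv c x := by
        refine intervalIntegral.integral_mono_ae_restrict hmb hgint
          (hcmono.intervalIntegrable_neg_deriv hmb) ?_
        rw [EventuallyLE, ← restrict_Ioo_eq_restrict_Icc, ae_restrict_iff' measurableSet_Ioo]
        filter_upwards [hle] with x hx hmem
        have hδx : δ m ≤ δ x := hδ ⟨le_rfl, hmb⟩ (Ioo_subset_Icc_self hmem) hmem.1.le
        have hgx : 0 ≤ -deriv g x := neg_nonneg.2 (hgmono.deriv_nonpos_of_mem_Ioo hmem)
        exact (mul_le_mul_of_nonneg_right (by linarith) hgx).trans (hx hmem)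
    _ ≤ c m - c b := hcmono.intervalIntegral_neg_deriv_le hmb

theorem exists_measurableSet_neg_deriv_le_of_frequently {μstar : ℝ} {c g h δ : ℝ → ℝ}
    (hg : DifferentiableOn ℝ g (Ioo 0 μstar)) (hgmono : AntitoneOn g (Ioo 0 μstar))
    (hcmono : AntitoneOn c (Ioo 0 μstar))
    (hclb : ∀ μ ∈ Ioo (0 : ℝ) μstar, g μ - h μ ≤ c μ) (hcub : ∀ μ ∈ Ioo (0 : ℝ) μstar, c μ ≤ g μ)
    (hδmono : MonotoneOn δ (Ioo 0 μstar)) (hδ : Measurable δ)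
    (hgap : ∃ᶠ b in 𝓝[>] 0, ∃ m ∈ Ioo 0 b, h b < δ m * (g m - g b)) :
    ∃ S₀ : Set ℝ, MeasurableSet S₀ ∧ S₀ ⊆ Ioo 0 μstar ∧
      (∀ μ ∈ Ioo (0 : ℝ) μstar, 0 < volume (S₀ ∩ Ioo 0 μ)) ∧
      (∀ μ ∈ S₀, ∃ c' g' : ℝ, HasDerivAt c c' μ ∧ HasDerivAt g g' μ ∧
        -c' ≤ (1 + δ μ) * (-g')) := by
  set S₀ := Ioo 0 μstar ∩ ({x | DifferentiableAt ℝ c x} ∩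
    {x | -deriv c x ≤ (1 + δ x) * -deriv g x})
  have hS₀ : MeasurableSet S₀ := measurableSet_Ioo.inter
    ((measurableSet_of_differentiableAt ℝ c).inter (measurableSet_le (measurable_deriv c).neg
      ((measurable_const.add hδ).mul (measurable_deriv g).neg)))
  refine ⟨S₀, hS₀, inter_subset_left, fun μ hμ => ?_, fun μ ⟨hμ, hdiff, hle⟩ =>
    ⟨_, _, hdiff.hasDerivAt, (hg.differentiableAt (isOpen_Ioo.mem_nhds hμ)).hasDerivAt, hle⟩⟩
  rw [pos_iff_ne_zero]
  intro hnull
  obtain ⟨b, ⟨m, hm, hgap⟩, hb⟩ := (hgap.and_eventually (Ioo_mem_nhdsGT hμ.1)).exists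
  have hIcc : Icc m b ⊆ Ioo 0 μstar := Icc_subset_Ioo hm.1 (hb.2.trans hμ.2)
  have hcdiff : ∀ᵐ x, x ∈ Ioo 0 μstar → DifferentiableAt ℝ c x := by
    filter_upwards [hcmono.neg.ae_differentiableWithinAt_of_mem] with x hx hxmem
    simpa using ((hx hxmem).differentiableAt (isOpen_Ioo.mem_nhds hxmem)).neg
  have hbad : ∀ᵐ x, x ∉ S₀ ∩ Ioo 0 μ := measure_eq_zero_iff_ae_notMem.1 hnull
  have hle : ∀ᵐ x, x ∈ Ioo m b → (1 + δ x) * -deriv g x ≤ -deriv c x := by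
    filter_upwards [hcdiff, hbad] with x hdx hx hxmem
    have hx0 : x ∈ Ioo 0 μstar := hIcc (Ioo_subset_Icc_self hxmem)
    by_contra hlt
    exact hx ⟨⟨hx0, hdx hx0, (not_le.1 hlt).le⟩, hm.1.trans hxmem.1, hxmem.2.trans hb.2⟩
  have key := mul_sub_le_sub_of_ae_le_neg_deriv hm.2.le (hcmono.mono hIcc) (hgmono.mono hIcc)
    (fun x hx => hg.differentiableAt (isOpen_Ioo.mem_nhds (hIcc hx))) (hδmono.mono hIcc) hle
  have hcm := hcub m (hIcc (left_mem_Icc.2 hm.2.le))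
  have hcb := hclb b (hIcc (right_mem_Icc.2 hm.2.le))
  nlinarith

structure IsStruweProfile (μstar K γ : ℝ) (h δ : ℝ → ℝ) : Prop where
  differentiableOn : DifferentiableOn ℝ h (Ioo 0 μstar)
  nonneg : ∀ μ, 0 < μ → 0 ≤ h μ
  nonneg_δ : ∀ μ, 0 < μ → 0 ≤ δ μ
  monotoneOn_δ : MonotoneOn δ (Ioo 0 μstar)
  measurable_δ : Measurable δ
  frequently_lt : ∃ᶠ b in 𝓝[>] 0, ∃ m ∈ Ioo 0 b,
    (1 + δ m) * h b < δ m * (K * m ^ γ - K * b ^ γ)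

theorem IsStruweProfile.exists_measurableSet_neg_deriv_le {μstar K γ : ℝ} {c g h δ : ℝ → ℝ}
    (hP : IsStruweProfile μstar K γ h δ) (hg : ∀ μ, g μ = K * μ ^ γ + h μ)
    (hgmono : AntitoneOn g (Ioo 0 μstar)) (hcmono : AntitoneOn c (Ioo 0 μstar))
    (hclb : ∀ μ ∈ Ioo (0 : ℝ) μstar, K * μ ^ γ ≤ c μ) (hcub : ∀ μ ∈ Ioo (0 : ℝ) μstar, c μ ≤ g μ) :
    ∃ S₀ : Set ℝ, MeasurableSet S₀ ∧ S₀ ⊆ Ioo 0 μstar ∧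
      (∀ μ ∈ Ioo (0 : ℝ) μstar, 0 < volume (S₀ ∩ Ioo 0 μ)) ∧
      (∀ μ ∈ S₀, ∃ c' g' : ℝ, HasDerivAt c c' μ ∧ HasDerivAt g g' μ ∧
        -c' ≤ (1 + δ μ) * (-g')) := by
  have hgd : DifferentiableOn ℝ g (Ioo 0 μstar) := by
    rw [show g = fun μ => K * μ ^ γ + h μ from funext hg]
    exact fun x hx => ((differentiableAt_id.rpow_const (Or.inl hx.1.ne')).const_mul K
      |>.differentiableWithinAt).add (hP.differentiableOn x hx)
  refine exists_measurableSet_neg_deriv_le_of_frequently (h := h) hgd hgmono hcmono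
    (fun μ hμ => by linarith [hg μ, hclb μ hμ]) hcub hP.monotoneOn_δ hP.measurable_δ ?_
  refine hP.frequently_lt.mono fun b ⟨m, hm, hlt⟩ => ⟨m, hm, ?_⟩
  rw [hg, hg]
  nlinarith [mul_nonneg (hP.nonneg_δ m hm.1) (hP.nonneg m hm.1)]

theorem tendsto_rpow_nhdsGT_zero {p : ℝ} (hp : 0 < p) :
    Tendsto (fun b : ℝ => b ^ p) (𝓝[>] 0) (𝓝 0) :=
  ((Real.continuous_rpow_const hp.le).tendsto' 0 0 (Real.zero_rpow hp.ne')).mono_left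
    nhdsWithin_le_nhds

theorem isStruweProfile_rpow {μstar K C α β γ : ℝ} (hK : 0 < K) (hC : 0 ≤ C) (hα : 1 / 2 < α)
    (hβ : 1 / 2 < β) (hβγ : β + γ = 1 / 2) :
    IsStruweProfile μstar K γ (fun μ => C * μ ^ α) (fun μ => μ ^ β) where
  differentiableOn x hx :=
    ((differentiableAt_id.rpow_const (Or.inl hx.1.ne')).const_mul C).differentiableWithinAt
  nonneg μ hμ := mul_nonneg hC (Real.rpow_nonneg hμ.le α)
  nonneg_δ μ hμ := Real.rpow_nonneg hμ.le β
  monotoneOn_δ x hx y _ hxy := Real.rpow_le_rpow hx.1.le hxy (by linarith)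
  measurable_δ := by fun_prop
  frequently_lt := by
    set L := K * (1 / 2 ^ γ - 1) / 2 ^ β
    have hL : 0 < L := by
      have := one_lt_one_div (by positivity)
        (Real.rpow_lt_one_of_one_lt_of_neg one_lt_two (by linarith : γ < 0))
      have : 0 < 1 / (2 : ℝ) ^ γ - 1 := by linarith
      positivity
    have hsmall : Tendsto (fun b : ℝ => (1 + b ^ β / 2 ^ β) * C * b ^ (α - 1 / 2))
        (𝓝[>] 0) (𝓝 0) := by
      simpa using (((tendsto_rpow_nhdsGT_zero (by linarith)).div_const (2 ^ β)).const_add 1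
        |>.mul_const C).mul (tendsto_rpow_nhdsGT_zero (by linarith : 0 < α - 1 / 2))
    refine Eventually.frequently ?_
    filter_upwards [hsmall.eventually (gt_mem_nhds hL), self_mem_nhdsWithin]
      with b hlt (hb : 0 < b)
    refine ⟨b / 2, ⟨by positivity, by linarith⟩, ?_⟩
    have hβγ' : b ^ β * b ^ γ = b ^ (1 / 2 : ℝ) := by rw [← Real.rpow_add hb, hβγ]
    have hα' : b ^ α = b ^ (1 / 2 : ℝ) * b ^ (α - 1 / 2) := by
      rw [← Real.rpow_add hb]; ring_nf
    simp only [Real.div_rpow hb.le zero_le_two]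
    calc (1 + b ^ β / 2 ^ β) * (C * b ^ α)
        = b ^ (1 / 2 : ℝ) * ((1 + b ^ β / 2 ^ β) * C * b ^ (α - 1 / 2)) := by rw [hα']; ring
      _ < b ^ (1 / 2 : ℝ) * L := mul_lt_mul_of_pos_left hlt (by positivity)
      _ = b ^ β / 2 ^ β * (K * (b ^ γ / 2 ^ γ) - K * b ^ γ) := by rw [← hβγ']; ring

theorem isStruweProfile_const_add_sqrt {μstar K C h₀ δ₀ : ℝ} (hC : 0 ≤ C) (hh₀ : 0 ≤ h₀)
    (hδ₀ : 0 < δ₀) (hK : h₀ < K * δ₀) :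
    IsStruweProfile μstar K (-(1 / 2)) (fun μ => h₀ + C * μ ^ (1 / 2 : ℝ))
      (fun μ => δ₀ * μ ^ (1 / 2 : ℝ)) where
  differentiableOn x hx :=
    (((differentiableAt_id.rpow_const (Or.inl hx.1.ne')).const_mul C).const_add
      h₀).differentiableWithinAt
  nonneg μ hμ := add_nonneg hh₀ (mul_nonneg hC (Real.rpow_nonneg hμ.le _))
  nonneg_δ μ hμ := mul_nonneg hδ₀.le (Real.rpow_nonneg hμ.le _)
  monotoneOn_δ x hx y _ hxy :=
    mul_le_mul_of_nonneg_left (Real.rpow_le_rpow hx.1.le hxy (by norm_num)) hδ₀.le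
  measurable_δ := by fun_prop
  frequently_lt := by
    -- with `m = s² b` the gain `δ m · K (m ^ γ - b ^ γ) = K δ₀ (1 - s)` does not shrink with `b`
    obtain ⟨s, hs, hsK⟩ : ∃ s : ℝ, s ∈ Ioo 0 1 ∧ h₀ < K * δ₀ * (1 - s) := by
      have hcont : Tendsto (fun s : ℝ => K * δ₀ * (1 - s)) (𝓝[>] 0) (𝓝 (K * δ₀)) := by
        simpa using ((tendsto_id.const_sub 1).const_mul (K * δ₀)).mono_left
          (nhdsWithin_le_nhds (a := (0 : ℝ)))
      exact ((hcont.eventually (lt_mem_nhds hK)).and (Ioo_mem_nhdsGT one_pos)).exists.imp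
        fun s hs => ⟨hs.2, hs.1⟩
    have hsmall : Tendsto
        (fun b : ℝ => (1 + δ₀ * (s * b ^ (1 / 2 : ℝ))) * (h₀ + C * b ^ (1 / 2 : ℝ)))
        (𝓝[>] 0) (𝓝 h₀) := by
      have hr := tendsto_rpow_nhdsGT_zero (by norm_num : (0 : ℝ) < 1 / 2)
      simpa using (((hr.const_mul s).const_mul δ₀).const_add 1).mul ((hr.const_mul C).const_add h₀)
    refine Eventually.frequently ?_
    filter_upwards [hsmall.eventually (gt_mem_nhds hsK), self_mem_nhdsWithin]
      with b hlt (hb : 0 < b)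
    have hm : 0 < s ^ 2 * b := by have := hs.1; positivity
    refine ⟨s ^ 2 * b, ⟨hm, ?_⟩, ?_⟩
    · exact mul_lt_of_lt_one_left hb (pow_lt_one₀ hs.1.le hs.2 two_ne_zero)
    have hsqrt : (s ^ 2 * b) ^ (1 / 2 : ℝ) = s * b ^ (1 / 2 : ℝ) := by
      rw [Real.mul_rpow (sq_nonneg s) hb.le, ← Real.sqrt_eq_rpow, Real.sqrt_sq hs.1.le]
    have hr : 0 < b ^ (1 / 2 : ℝ) := by positivity
    rw [Real.rpow_neg hm.le, Real.rpow_neg hb.le, hsqrt]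
    refine hlt.trans_eq ?_
    have := hs.1.ne'
    field_simp

theorem isStruweProfile_inv_abs_log {μstar K C : ℝ} (hμstar : μstar ≤ 1) (hK : 0 < K)
    (hC : 0 ≤ C) :
    IsStruweProfile μstar K (-1) (fun μ => C / |Real.log μ|)
      (fun μ => μ * |Real.log μ| ^ (-(1 : ℝ) / 2)) where
  differentiableOn x hx := by
    have hlog : Real.log x ≠ 0 := (Real.log_neg hx.1 (hx.2.trans_le hμstar)).ne
    exact ((differentiableAt_const C).div ((Real.differentiableAt_log hx.1.ne').abs hlog)
      (abs_ne_zero.2 hlog)).differentiableWithinAt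
  nonneg μ _ := div_nonneg hC (abs_nonneg _)
  nonneg_δ μ hμ := mul_nonneg hμ.le (Real.rpow_nonneg (abs_nonneg _) _)
  monotoneOn_δ := by
    refine monotoneOn_id.mul (fun x hx y hy hxy => ?_) (fun x hx => hx.1.le)
      (fun x _ => Real.rpow_nonneg (abs_nonneg _) _)
    have hlogy := Real.log_neg hy.1 (hy.2.trans_le hμstar)
    have hlogx := Real.log_neg hx.1 (hx.2.trans_le hμstar)
    refine Real.rpow_le_rpow_of_nonpos (abs_pos.2 hlogy.ne) ?_ (by norm_num)
    rw [abs_of_neg hlogy, abs_of_neg hlogx]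
    exact neg_le_neg (Real.log_le_log hx.1 hxy)
  measurable_δ := by fun_prop
  frequently_lt := by
    -- with `m = b²` the gain is `u K (1 - b) r b`, while `h b = C (r b)²`
    set u : ℝ := 2 ^ (-(1 : ℝ) / 2)
    set r : ℝ → ℝ := fun b => |Real.log b| ^ (-(1 : ℝ) / 2)
    have hr : Tendsto r (𝓝[>] 0) (𝓝 0) := by
      have := (tendsto_rpow_neg_atTop (by norm_num : (0 : ℝ) < 1 / 2)).comp
        (tendsto_abs_atBot_atTop.comp Real.tendsto_log_nhdsGT_zero)
      simpa [r, neg_div, Function.comp_def] using this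
    have hb : Tendsto (fun b : ℝ => b) (𝓝[>] 0) (𝓝 0) := tendsto_id.mono_left nhdsWithin_le_nhds
    have hlt : ∀ᶠ b in 𝓝[>] 0, (1 + b ^ 2 * (u * r b)) * C * r b < u * K * (1 - b) := by
      refine Tendsto.eventually_lt (y := 0) (z := u * K) ?_ ?_ (mul_pos (by positivity) hK)
      · simpa using (((hb.pow 2).mul (hr.const_mul u)).const_add 1 |>.mul_const C).mul hr
      · simpa using ((hb.const_sub 1).const_mul (u * K))
    refine Eventually.frequently ?_
    filter_upwards [hlt, Ioo_mem_nhdsGT one_pos] with b hlt hb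
    refine ⟨b ^ 2, ⟨by have := hb.1; positivity, ?_⟩, ?_⟩
    · exact pow_lt_self_of_lt_one₀ hb.1 hb.2 one_lt_two
    have hlog : 0 < |Real.log b| := abs_pos.2 (Real.log_neg hb.1 hb.2).ne
    have hlog2 : |Real.log (b ^ 2)| = 2 * |Real.log b| := by
      rw [Real.log_pow, abs_mul]; norm_num
    have hrr : r b * r b = |Real.log b|⁻¹ := by
      rw [← Real.rpow_add hlog, ← Real.rpow_neg_one]; norm_num
    have hrpos : 0 < r b := by positivity
    simp only [Real.rpow_neg_one, hlog2, Real.mul_rpow zero_le_two hlog.le]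
    change (1 + b ^ 2 * (u * r b)) * (C / |Real.log b|)
      < b ^ 2 * (u * r b) * (K * (b ^ 2)⁻¹ - K * b⁻¹)
    have := hb.1.ne'
    calc (1 + b ^ 2 * (u * r b)) * (C / |Real.log b|)
        = r b * ((1 + b ^ 2 * (u * r b)) * C * r b) := by rw [div_eq_mul_inv, ← hrr]; ring
      _ < r b * (u * K * (1 - b)) := mul_lt_mul_of_pos_left hlt hrpos
      _ = b ^ 2 * (u * r b) * (K * (b ^ 2)⁻¹ - K * b⁻¹) := by field_simp

/-- the key derivative-comparison lemma (nonstandard adaptation of Struwe's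
monotonicity trick). If `c` is non-increasing on `(0,μ**)` and squeezed between
`(1/N)S^{N/2}μ^{1-N/2}` and `g(μ) = (1/N)S^{N/2}μ^{1-N/2} + h(μ)`, with `g` non-increasing,
then there is a measurable set `S₀ ⊆ (0,μ**)` of positive measure in every `(0,μ)`, on which
`c` is differentiable with `-c'(μ) ≤ (1+δ(μ))·(-g'(μ))`. -/
theorem statement12 (N : ℕ) (hN : 3 ≤ N) (S C : ℝ) (hS : 0 < S) (hC : 0 < C)
    (h₀ δ₀ : ℝ)
    (hN3 : N = 3 → 0 ≤ h₀ ∧ 0 < δ₀ ∧ h₀ < (1 / 3) * S ^ ((3 : ℝ) / 2) * δ₀)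
    (h δf g : ℝ → ℝ)
    (hh : ∀ μ, h μ = if 5 ≤ N then C * μ ^ (((N : ℝ) - 2) * ((N : ℝ) - 4) / 4)
      else if N = 4 then C / |Real.log μ|
      else h₀ + C * μ ^ ((1 : ℝ) / 2))
    (hδ : ∀ μ, δf μ = if 5 ≤ N then μ ^ (((N : ℝ) - 1) / 2)
      else if N = 4 then μ * |Real.log μ| ^ (-(1 : ℝ) / 2)
      else δ₀ * μ ^ ((1 : ℝ) / 2))
    (hg : ∀ μ, g μ = (1 / N : ℝ) * S ^ ((N : ℝ) / 2) * μ ^ (1 - (N : ℝ) / 2) + h μ)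
    (μstar : ℝ) (hμstar : μstar ∈ Ioo (0 : ℝ) 1)
    (hgmono : AntitoneOn g (Ioo 0 μstar))
    (c : ℝ → ℝ) (hcmono : AntitoneOn c (Ioo 0 μstar))
    (hclb : ∀ μ ∈ Ioo (0 : ℝ) μstar,
      (1 / N : ℝ) * S ^ ((N : ℝ) / 2) * μ ^ (1 - (N : ℝ) / 2) ≤ c μ)
    (hcub : ∀ μ ∈ Ioo (0 : ℝ) μstar, c μ ≤ g μ) :
    ∃ S₀ : Set ℝ, MeasurableSet S₀ ∧ S₀ ⊆ Ioo 0 μstar ∧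
      (∀ μ ∈ Ioo (0 : ℝ) μstar, 0 < volume (S₀ ∩ Ioo 0 μ)) ∧
      (∀ μ ∈ S₀, ∃ c' g' : ℝ, HasDerivAt c c' μ ∧ HasDerivAt g g' μ ∧
        -c' ≤ (1 + δf μ) * (-g')) := by
  have hK : 0 < (1 / N : ℝ) * S ^ ((N : ℝ) / 2) := by positivity
  have hP : IsStruweProfile μstar ((1 / N : ℝ) * S ^ ((N : ℝ) / 2)) (1 - (N : ℝ) / 2) h δf := by
    obtain hN5 | rfl | rfl : 5 ≤ N ∨ N = 4 ∨ N = 3 := by omega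
    · obtain rfl : h = fun μ => C * μ ^ (((N : ℝ) - 2) * ((N : ℝ) - 4) / 4) :=
        funext fun μ => by simp [hh, hN5]
      obtain rfl : δf = fun μ => μ ^ (((N : ℝ) - 1) / 2) := funext fun μ => by simp [hδ, hN5]
      have hN5' : (5 : ℝ) ≤ N := by exact_mod_cast hN5
      exact isStruweProfile_rpow hK hC.le (by nlinarith) (by linarith) (by ring)
    · obtain rfl : h = fun μ => C / |Real.log μ| := funext fun μ => by simp [hh]
      obtain rfl : δf = fun μ => μ * |Real.log μ| ^ (-(1 : ℝ) / 2) := funext fun μ => by simp [hδ]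
      rw [show 1 - ((4 : ℕ) : ℝ) / 2 = -1 by norm_num]
      exact isStruweProfile_inv_abs_log hμstar.2.le hK hC.le
    · obtain ⟨hh₀, hδ₀, hh₀δ₀⟩ := hN3 rfl
      obtain rfl : h = fun μ => h₀ + C * μ ^ (1 / 2 : ℝ) := funext fun μ => by simp [hh]
      obtain rfl : δf = fun μ => δ₀ * μ ^ (1 / 2 : ℝ) := funext fun μ => by simp [hδ]
      rw [show 1 - ((3 : ℕ) : ℝ) / 2 = -(1 / 2) by norm_num]
      exact isStruweProfile_const_add_sqrt hC.le hh₀ hδ₀ (by convert hh₀δ₀ using 2; norm_num)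
  exact hP.exists_measurableSet_neg_deriv_le hg hgmono hcmono hclb hcub
end

section
/- Let N ≥ 3, 2* = 2N/(N−2), S > 0 and μ > 0, and set ᾱ = S^{N/2}·μ^{1−N/2}. Let P, Q : [0,1] → [0, ∞) be continuous functions such that S·Q(t) ≤ P(t) for every t ∈ [0,1] and P(0) < ᾱ < P(1). Then max_{t ∈ [0,1]} [ (1/2)·P(t) − (μ/2*)·Q(t)^{2*/2} ] ≥ (1/N)·S^{N/2}·μ^{1−N/2}. -/
/-!
By the intermediate value theorem the path meets the level `P = ᾱ` at some `t`, and there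
`S Q(t) ≤ ᾱ`. The level `ᾱ = μ (S/μ)^{N/2}` is exactly the one with `μ (ᾱ/S)^{2*/2} = ᾱ`, so the
energy at `t` is at least `ᾱ/2 - ᾱ/2* = ᾱ/N`.
-/

open Set

noncomputable section

def criticalLevel (S μ c : ℝ) : ℝ := S ^ (c / 2) * μ ^ (1 - c / 2)

section CriticalLevel

variable {S μ : ℝ}

theorem criticalLevel_eq_mul_rpow (hS : 0 < S) (hμ : 0 < μ) (c : ℝ) :
    criticalLevel S μ c = μ * (S / μ) ^ (c / 2) := by
  rw [criticalLevel, Real.div_rpow hS.le hμ.le, Real.rpow_sub hμ, Real.rpow_one]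
  ring

theorem criticalLevel_div_self (hS : 0 < S) (hμ : 0 < μ) (c : ℝ) :
    criticalLevel S μ c / S = (S / μ) ^ ((c - 2) / 2) := by
  rw [criticalLevel, Real.div_rpow hS.le hμ.le, sub_div, Real.rpow_sub hS, Real.rpow_sub hμ,
    Real.rpow_sub hμ, show (2 : ℝ) / 2 = 1 by norm_num, Real.rpow_one, Real.rpow_one]
  field_simp

theorem mul_criticalLevel_div_self_rpow (hS : 0 < S) (hμ : 0 < μ) {c : ℝ} (hc : c ≠ 2) :
    μ * (criticalLevel S μ c / S) ^ (c / (c - 2)) = criticalLevel S μ c := by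
  have hc' : c - 2 ≠ 0 := sub_ne_zero.mpr hc
  rw [criticalLevel_div_self hS hμ, ← Real.rpow_mul (div_pos hS hμ).le,
    criticalLevel_eq_mul_rpow hS hμ]
  congr 2
  field_simp

theorem criticalLevel_div_le_energy (hS : 0 < S) (hμ : 0 < μ) {c : ℝ} (hc : 2 < c) {q : ℝ}
    (hq₀ : 0 ≤ q) (hq : S * q ≤ criticalLevel S μ c) :
    1 / c * criticalLevel S μ c
      ≤ 1 / 2 * criticalLevel S μ c - μ / (2 * c / (c - 2)) * q ^ (2 * c / (c - 2) / 2) := by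
  set α := criticalLevel S μ c
  have hc₂ : 0 < c - 2 := sub_pos.mpr hc
  have hexp : 2 * c / (c - 2) / 2 = c / (c - 2) := by field_simp
  have hqα : q ^ (c / (c - 2)) ≤ (α / S) ^ (c / (c - 2)) :=
    Real.rpow_le_rpow hq₀ ((le_div_iff₀ hS).mpr (by linarith)) (by positivity)
  have hμα : μ * q ^ (c / (c - 2)) ≤ α :=
    (mul_le_mul_of_nonneg_left hqα hμ.le).trans_eq (mul_criticalLevel_div_self_rpow hS hμ hc.ne')
  calc 1 / c * α = 1 / 2 * α - (c - 2) / (2 * c) * α := by field_simp; ring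
    _ ≤ 1 / 2 * α - (c - 2) / (2 * c) * (μ * q ^ (c / (c - 2))) := by gcongr
    _ = _ := by rw [hexp]; field_simp

end CriticalLevel

theorem statement14_general (N : ℕ) (hN : 3 ≤ N) (S μ : ℝ) (hS : 0 < S) (hμ : 0 < μ)
    (P Q : ℝ → ℝ) (hP : ContinuousOn P (Icc 0 1))
    (hQnn : ∀ t ∈ Icc (0 : ℝ) 1, 0 ≤ Q t)
    (hSob : ∀ t ∈ Icc (0 : ℝ) 1, S * Q t ≤ P t)
    (h0 : P 0 < S ^ ((N : ℝ) / 2) * μ ^ (1 - (N : ℝ) / 2))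
    (h1 : S ^ ((N : ℝ) / 2) * μ ^ (1 - (N : ℝ) / 2) < P 1) :
    ∃ t ∈ Icc (0 : ℝ) 1,
      (1 / N : ℝ) * S ^ ((N : ℝ) / 2) * μ ^ (1 - (N : ℝ) / 2)
        ≤ (1 / 2) * P t - (μ / critExp N) * Q t ^ (critExp N / 2) := by
  obtain ⟨t, ht, hPt⟩ :=
    intermediate_value_Icc zero_le_one hP (show criticalLevel S μ N ∈ Icc (P 0) (P 1) from
      ⟨h0.le, h1.le⟩)
  have hN' : (2 : ℝ) < N := by exact_mod_cast hN
  refine ⟨t, ht, ?_⟩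
  rw [mul_assoc, hPt]
  exact criticalLevel_div_le_energy hS hμ hN' (hQnn t ht) (hPt ▸ hSob t ht)

/-- abstract lower bound for the mountain pass level. If `S·Q ≤ P` on `[0,1]`
(Sobolev inequality along a path of normalized functions) and `P` crosses the level
`ᾱ = S^{N/2}μ^{1-N/2}`, then the maximum of `(1/2)P(t) - (μ/2*)Q(t)^{2*/2}` is at least
`(1/N)S^{N/2}μ^{1-N/2}`. -/
theorem statement14 (N : ℕ) (hN : 3 ≤ N) (S μ : ℝ) (hS : 0 < S) (hμ : 0 < μ)
    (P Q : ℝ → ℝ) (hP : ContinuousOn P (Icc 0 1)) (hQ : ContinuousOn Q (Icc 0 1))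
    (hPnn : ∀ t ∈ Icc (0 : ℝ) 1, 0 ≤ P t) (hQnn : ∀ t ∈ Icc (0 : ℝ) 1, 0 ≤ Q t)
    (hSob : ∀ t ∈ Icc (0 : ℝ) 1, S * Q t ≤ P t)
    (h0 : P 0 < S ^ ((N : ℝ) / 2) * μ ^ (1 - (N : ℝ) / 2))
    (h1 : S ^ ((N : ℝ) / 2) * μ ^ (1 - (N : ℝ) / 2) < P 1) :
    ∃ t ∈ Icc (0 : ℝ) 1,
      (1 / N : ℝ) * S ^ ((N : ℝ) / 2) * μ ^ (1 - (N : ℝ) / 2)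
        ≤ (1 / 2) * P t - (μ / critExp N) * Q t ^ (critExp N / 2) :=
  statement14_general N hN S μ hS hμ P Q hP hQnn hSob h0 h1
end
end
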